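/- arXiv:1908.05788 — 5 statements merged into one kernel-verified Lean document; each statement's English description precedes it below -/
import Mathlib

section
/- For every η ≥ 1, the finite difference symbol f_η(θ) = d_{η,0} + 2∑_{k=1}^{η} d_{η,k} cos(kθ) satisfies f_η(θ)/θ² → 1 as θ → 0⁺. -/
open Real Finset Filter

noncomputable def fdCoeff (η k : ℕ) : ℝ :=
  (-1 : ℝ) ^ k * ((Nat.factorial η * Nat.factorial η : ℕ) : ℝ) /
    ((Nat.factorial (η - k) * Nat.factorial (η + k) : ℕ) : ℝ) * (2 / (k : ℝ) ^ 2)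

noncomputable def fdCoeff0 (η : ℕ) : ℝ := -2 * ∑ k ∈ Finset.Icc 1 η, fdCoeff η k

noncomputable def fdSymbol (η : ℕ) (θ : ℝ) : ℝ :=
  fdCoeff0 η + 2 * ∑ k ∈ Finset.Icc 1 η, fdCoeff η k * Real.cos (k * θ)

/-- The alternating binomial identity:
`C(2η,η) + 2 ∑_{k=1}^{η} (-1)^k C(2η, η+k) = 0`. -/
lemma fd_key_int (η : ℕ) (hη : 1 ≤ η) :
    ((2*η).choose η : ℤ) + 2 * ∑ k ∈ Icc 1 η, (-1:ℤ)^k * (2*η).choose (η+k) = 0 := by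
  have h0 : (∑ m ∈ range (2*η + 1), ((-1) ^ m * (2*η).choose m : ℤ)) = 0 :=
    Int.alternating_sum_range_choose_of_ne (by omega)
  have hsplit : (∑ m ∈ range (2*η + 1), ((-1) ^ m * (2*η).choose m : ℤ)) =
      (∑ m ∈ range (η + 1), ((-1) ^ m * (2*η).choose m : ℤ)) +
      ∑ m ∈ Ico (η+1) (2*η+1), ((-1) ^ m * (2*η).choose m : ℤ) := by
    rw [range_eq_Ico, range_eq_Ico, Finset.sum_Ico_consecutive]
    · omega
    · omega
  have h2 : (∑ m ∈ Ico (η+1) (2*η+1), ((-1) ^ m * (2*η).choose m : ℤ)) =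
      (-1)^η * ∑ k ∈ Icc 1 η, (-1:ℤ)^k * (2*η).choose (η+k) := by
    rw [Finset.mul_sum]
    have hI : Ico (η+1) (2*η+1) = Icc (η+1) (η+η) := by
      rw [Finset.Ico_add_one_right_eq_Icc]
      congr 1
      omega
    rw [hI, ← map_add_left_Icc 1 η η, Finset.sum_map]
    apply Finset.sum_congr rfl
    intro k _
    simp only [addLeftEmbedding_apply]
    rw [pow_add]
    ring
  have h1 : (∑ m ∈ range η, ((-1) ^ m * (2*η).choose m : ℤ)) =
      ∑ m ∈ Ico (η+1) (2*η+1), ((-1) ^ m * (2*η).choose m : ℤ) := by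
    apply Finset.sum_nbij' (i := fun m => 2*η - m) (j := fun m => 2*η - m)
    · intro a ha
      simp only [Finset.mem_range] at ha
      simp only [Finset.mem_Ico]
      omega
    · intro a ha
      simp only [Finset.mem_Ico] at ha
      simp only [Finset.mem_range]
      omega
    · intro a ha
      simp only [Finset.mem_range] at ha
      omega
    · intro a ha
      simp only [Finset.mem_Ico] at ha
      omega
    · intro a ha
      simp only [Finset.mem_range] at ha
      have hc : (2*η).choose (2*η - a) = (2*η).choose a :=
        Nat.choose_symm (by omega)
      rw [hc]
      have hpow : ((-1:ℤ))^(2*η - a) = (-1)^a := by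
        have h2a : 2*η - a + 2*a = 2*η + a := by omega
        have hp := pow_add (-1:ℤ) (2*η - a) (2*a)
        rw [h2a, pow_add, pow_mul, pow_mul] at hp
        simpa using hp.symm
      rw [hpow]
  have hfirst : (∑ m ∈ range (η + 1), ((-1) ^ m * (2*η).choose m : ℤ)) =
      (∑ m ∈ range η, ((-1) ^ m * (2*η).choose m : ℤ)) + (-1)^η * (2*η).choose η := by
    rw [Finset.sum_range_succ]
  rw [hsplit, hfirst, h1, h2] at h0
  rcases Nat.even_or_odd η with he | ho
  · rw [he.neg_one_pow] at h0; linarith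
  · rw [ho.neg_one_pow] at h0; linarith

/-- Ratio of factorials as ratio of binomials. -/
lemma fd_ratio (η k : ℕ) (hk : k ≤ η) :
    ((Nat.factorial η * Nat.factorial η : ℕ) : ℝ) /
      ((Nat.factorial (η - k) * Nat.factorial (η + k) : ℕ) : ℝ) =
    ((2*η).choose (η+k) : ℝ) / ((2*η).choose η : ℝ) := by
  have h1 : (2*η).choose (η+k) * Nat.factorial (η+k) * Nat.factorial (η-k) =
      Nat.factorial (2*η) := by
    have h := Nat.choose_mul_factorial_mul_factorial (n := 2*η) (k := η+k) (by omega)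
    have he : 2*η - (η+k) = η - k := by omega
    rwa [he] at h
  have h2 : (2*η).choose η * Nat.factorial η * Nat.factorial η =
      Nat.factorial (2*η) := by
    have h := Nat.choose_mul_factorial_mul_factorial (n := 2*η) (k := η) (by omega)
    have he : 2*η - η = η := by omega
    rwa [he] at h
  have hnat : (Nat.factorial η * Nat.factorial η) * (2*η).choose η =
      ((2*η).choose (η+k)) * (Nat.factorial (η - k) * Nat.factorial (η + k)) := by
    nlinarith [h1, h2]
  rw [div_eq_div_iff]
  · exact_mod_cast hnat
  · exact Nat.cast_ne_zero.mpr (by positivity)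
  · exact Nat.cast_ne_zero.mpr (Nat.choose_pos (by omega)).ne'
  
/-- The weighted coefficient sum equals `1`. -/
lemma fd_sum_val (η : ℕ) (hη : 1 ≤ η) :
    ∑ k ∈ Icc 1 η, fdCoeff η k * (-((k:ℝ)^2)) = 1 := by
  have hCpos : (0:ℝ) < ((2*η).choose η : ℝ) := by
    exact_mod_cast Nat.choose_pos (by omega : η ≤ 2*η)
  have hterm : ∀ k ∈ Icc 1 η, fdCoeff η k * (-((k:ℝ)^2)) =
      (-2 / ((2*η).choose η : ℝ)) * ((-1:ℝ)^k * ((2*η).choose (η+k) : ℝ)) := by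
    intro k hk
    simp only [Finset.mem_Icc] at hk
    have hk0 : ((k:ℝ)) ≠ 0 := Nat.cast_ne_zero.mpr (by omega)
    rw [fdCoeff, mul_div_assoc, fd_ratio η k hk.2]
    field_simp
  rw [Finset.sum_congr rfl hterm, ← Finset.mul_sum]
  have hkey : (∑ k ∈ Icc 1 η, (-1:ℝ)^k * ((2*η).choose (η+k) : ℝ)) =
      -(((2*η).choose η : ℝ)) / 2 := by
    have h := fd_key_int η hη
    have hcast : ((((2*η).choose η : ℤ) + 2 * ∑ k ∈ Icc 1 η,
        (-1:ℤ)^k * (2*η).choose (η+k) : ℤ) : ℝ) = 0 := by exact_mod_cast h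
    push_cast at hcast
    linarith
  rw [hkey]
  field_simp

/-- `sin x / x → 1` as `x → 0` (punctured). -/
lemma fd_sin_div : Tendsto (fun x : ℝ => Real.sin x / x) (nhdsWithin 0 {0}ᶜ) (nhds 1) := by
  have h := hasDerivAt_sin 0
  rw [hasDerivAt_iff_tendsto_slope] at h
  simp only [Real.cos_zero] at h
  refine h.congr' ?_
  filter_upwards [self_mem_nhdsWithin] with x hx
  simp [slope_def_field, div_eq_div_iff]

lemma fd_cos_term (k : ℕ) (hk : 1 ≤ k) :
    Tendsto (fun θ : ℝ => 2 * (Real.cos (k*θ) - 1) / θ^2)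
      (nhdsWithin 0 (Set.Ioi 0)) (nhds (-((k:ℝ)^2))) := by
  have hk0 : ((k:ℝ)) ≠ 0 := Nat.cast_ne_zero.mpr (by omega)
  have hkpos : (0:ℝ) < k := by positivity
  -- the map θ ↦ k θ / 2 tends to 0 within {0}ᶜ
  have hmap : Tendsto (fun θ : ℝ => (k:ℝ) * θ / 2) (nhdsWithin 0 (Set.Ioi 0))
      (nhdsWithin 0 {0}ᶜ) := by
    rw [tendsto_nhdsWithin_iff]
    constructor
    · have : Tendsto (fun θ : ℝ => (k:ℝ) * θ / 2) (nhds 0) (nhds ((k:ℝ) * 0 / 2)) :=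
        ((continuous_const.mul continuous_id).div_const 2).tendsto 0
      simp only [mul_zero, zero_div] at this
      exact this.mono_left nhdsWithin_le_nhds
    · filter_upwards [self_mem_nhdsWithin] with θ hθ
      have : (0:ℝ) < θ := hθ
      simp only [Set.mem_compl_iff, Set.mem_singleton_iff]
      positivity
  have hcomp : Tendsto (fun θ : ℝ => Real.sin ((k:ℝ)*θ/2) / ((k:ℝ)*θ/2))
      (nhdsWithin 0 (Set.Ioi 0)) (nhds 1) := fd_sin_div.comp hmap
  have hsq : Tendsto (fun θ : ℝ =>
      -((k:ℝ)^2) * (Real.sin ((k:ℝ)*θ/2) / ((k:ℝ)*θ/2))^2)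
      (nhdsWithin 0 (Set.Ioi 0)) (nhds (-((k:ℝ)^2))) := by
    have := ((hcomp.mul hcomp).const_mul (-((k:ℝ)^2)))
    simp only [mul_one] at this
    refine this.congr ?_
    intro θ
    ring
  refine hsq.congr' ?_
  filter_upwards [self_mem_nhdsWithin] with θ hθ
  have hθ0 : (0:ℝ) < θ := hθ
  have hsin : Real.sin ((k:ℝ)*θ/2)^2 = 1/2 - Real.cos ((k:ℝ)*θ)/2 := by
    have := Real.sin_sq_eq_half_sub ((k:ℝ)*θ/2)
    rw [this]
    congr 1
    congr 1
    ring_nf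
  rw [div_pow, hsin]
  field_simp
  ring

/-- `f_η(θ)/θ² → 1` as `θ → 0⁺`. -/
theorem fdSymbol_asymp_sq (η : ℕ) (hη : 1 ≤ η) :
    Filter.Tendsto (fun θ : ℝ => fdSymbol η θ / θ ^ 2)
      (nhdsWithin 0 (Set.Ioi 0)) (nhds 1) := by
  have hfun : ∀ θ : ℝ, fdSymbol η θ / θ^2 =
      ∑ k ∈ Icc 1 η, fdCoeff η k * (2 * (Real.cos (k*θ) - 1) / θ^2) := by
    intro θ
    have hsum : fdSymbol η θ = ∑ k ∈ Icc 1 η, fdCoeff η k * (2 * (Real.cos (k*θ) - 1)) := by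
      simp only [fdSymbol, fdCoeff0]
      rw [Finset.mul_sum, Finset.mul_sum, ← Finset.sum_add_distrib]
      apply Finset.sum_congr rfl
      intro k _
      ring
    rw [hsum, Finset.sum_div]
    apply Finset.sum_congr rfl
    intro k _
    rw [mul_div_assoc]
  have hlim : Tendsto (fun θ : ℝ =>
      ∑ k ∈ Icc 1 η, fdCoeff η k * (2 * (Real.cos (k*θ) - 1) / θ^2))
      (nhdsWithin 0 (Set.Ioi 0)) (nhds (∑ k ∈ Icc 1 η, fdCoeff η k * (-((k:ℝ)^2)))) := by
    apply tendsto_finset_sum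
    intro k hk
    have hk1 : 1 ≤ k := (Finset.mem_Icc.mp hk).1
    exact (fd_cos_term k hk1).const_mul _
  rw [fd_sum_val η hη] at hlim
  exact hlim.congr fun θ => (hfun θ).symm
end

section
/- For every η ≥ 1 and every k ≥ 1 with 2k ≤ η, the sine-polynomial coefficients a_k = 4·(η!·η!)/((η−k)!·(η+k)!·k) satisfy (2k)·a_{2k} ≤ (2k−1)·a_{2k−1}. -/
open Real Finset

noncomputable def fdSineCoeff (η k : ℕ) : ℝ :=
  4 * ((Nat.factorial η * Nat.factorial η : ℕ) : ℝ) /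
    (((Nat.factorial (η - k) * Nat.factorial (η + k) : ℕ) : ℝ) * (k : ℝ))

lemma fdSineCoeff_mul (η m : ℕ) (hm : 1 ≤ m) :
    (m : ℝ) * fdSineCoeff η m =
      4 * ((Nat.factorial η * Nat.factorial η : ℕ) : ℝ) /
        ((Nat.factorial (η - m) * Nat.factorial (η + m) : ℕ) : ℝ) := by
  have hm0 : (m : ℝ) ≠ 0 := by positivity
  have hD : ((Nat.factorial (η - m) * Nat.factorial (η + m) : ℕ) : ℝ) ≠ 0 := by
    positivity
  unfold fdSineCoeff
  field_simp

/-- `(2k)·a_{2k} ≤ (2k−1)·a_{2k−1}` for `1 ≤ k`, `2k ≤ η`. -/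
theorem fdSineCoeff_even_odd (η k : ℕ) (hη : 1 ≤ η) (hk : 1 ≤ k) (h2k : 2 * k ≤ η) :
    (2 * k : ℝ) * fdSineCoeff η (2 * k) ≤
      (2 * k - 1 : ℝ) * fdSineCoeff η (2 * k - 1) := by
  have h1 : (1 : ℕ) ≤ 2 * k := by omega
  have hcast : ((2 * k - 1 : ℕ) : ℝ) = (2 * k : ℝ) - 1 := by
    push_cast [Nat.cast_sub h1]; ring
  have hcast2 : (2 * (k:ℝ)) = ((2 * k : ℕ) : ℝ) := by push_cast; ring
  rw [← hcast, hcast2, fdSineCoeff_mul η (2 * k) h1, fdSineCoeff_mul η (2 * k - 1) (by omega)]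
  have hnat : Nat.factorial (η - (2 * k - 1)) * Nat.factorial (η + (2 * k - 1)) ≤
      Nat.factorial (η - 2 * k) * Nat.factorial (η + 2 * k) := by
    have e1 : η - (2 * k - 1) = (η - 2 * k) + 1 := by omega
    have e2 : η + 2 * k = (η + (2 * k - 1)) + 1 := by omega
    rw [e1, e2, Nat.factorial_succ, Nat.factorial_succ]
    have : (η - 2 * k) + 1 ≤ (η + (2 * k - 1)) + 1 := by omega
    calc ((η - 2 * k) + 1) * Nat.factorial (η - 2 * k) * Nat.factorial (η + (2 * k - 1))
        ≤ ((η + (2 * k - 1)) + 1) * Nat.factorial (η - 2 * k) * Nat.factorial (η + (2 * k - 1)) := by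
          exact Nat.mul_le_mul_right _ (Nat.mul_le_mul_right _ this)
      _ = Nat.factorial (η - 2 * k) * (((η + (2 * k - 1)) + 1) * Nat.factorial (η + (2 * k - 1))) := by ring
  have hpos : (0 : ℝ) < ((Nat.factorial (η - (2 * k - 1)) * Nat.factorial (η + (2 * k - 1)) : ℕ) : ℝ) := by
    positivity
  gcongr ?_ / ?_
  · exact le_rfl
  · exact_mod_cast hnat
end

section
/- For every η ≥ 1, the finite difference symbol f_η is nonnegative and monotone nondecreasing on [0, π]. -/
open Real Finset

lemma sum_Icc_one (n : ℕ) (f : ℕ → ℝ) :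
    ∑ k ∈ Icc 1 n, f k = ∑ i ∈ range n, f (1 + i) := by
  rw [← Finset.Ico_add_one_right_eq_Icc, Finset.sum_Ico_eq_sum_range]
  simp

lemma exp_half_eq (t : ℝ) :
    Complex.exp ((t : ℂ) * Complex.I) + 1 =
      Complex.exp ((t : ℂ) / 2 * Complex.I) * ((2 * Real.cos (t / 2) : ℝ) : ℂ) := by
  have h := Complex.two_cos (x := ((t / 2 : ℝ) : ℂ))
  have : ((2 * Real.cos (t / 2) : ℝ) : ℂ) = 2 * Complex.cos ((t : ℂ) / 2) := by
    push_cast [Complex.ofReal_cos]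
    ring_nf
  rw [this]
  have h2 : (2 : ℂ) * Complex.cos ((t : ℂ) / 2) =
      Complex.exp ((t : ℂ) / 2 * Complex.I) + Complex.exp (-((t : ℂ) / 2) * Complex.I) := by
    have := Complex.two_cos (x := ((t : ℂ) / 2))
    simpa using this
  rw [h2, mul_add, ← Complex.exp_add, ← Complex.exp_add]
  ring_nf
  simp [Complex.exp_zero, add_comm]

lemma key_complex (n : ℕ) (t : ℝ) :
    (((2 * Real.cos (t / 2)) ^ (2 * n) : ℝ) : ℂ) =
      ∑ j ∈ range (2 * n + 1), ((Nat.choose (2 * n) j : ℕ) : ℂ) *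
        Complex.exp ((((j : ℝ) - (n : ℝ)) * t : ℝ) * Complex.I) := by
  have h1 := exp_half_eq t
  have h2 : (Complex.exp ((t : ℂ) * Complex.I) + 1) ^ (2 * n) *
      Complex.exp (-((n : ℂ) * (t : ℂ) * Complex.I)) =
      (((2 * Real.cos (t / 2)) ^ (2 * n) : ℝ) : ℂ) := by
    rw [h1, mul_pow, ← Complex.exp_nat_mul]
    rw [mul_comm (Complex.exp _) _, mul_assoc, ← Complex.exp_add]
    have h0 : ((2 * n : ℕ) : ℂ) * ((t : ℂ) / 2 * Complex.I) + -((n : ℂ) * (t : ℂ) * Complex.I)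
        = 0 := by push_cast; ring
    rw [h0, Complex.exp_zero, mul_one]
    push_cast; ring
  rw [← h2, add_pow, Finset.sum_mul]
  refine Finset.sum_congr rfl fun j hj => ?_
  rw [one_pow, ← Complex.exp_nat_mul, mul_one,
    mul_comm (Complex.exp _) ((Nat.choose (2*n) j : ℂ)), mul_assoc, ← Complex.exp_add]
  congr 2
  push_cast
  ring

lemma cos_sum_real (n : ℕ) (t : ℝ) :
    (2 * Real.cos (t / 2)) ^ (2 * n) =
      ∑ j ∈ range (2 * n + 1), (Nat.choose (2 * n) j : ℝ) *
        Real.cos (((j : ℝ) - (n : ℝ)) * t) := by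
  have h := congrArg Complex.re (key_complex n t)
  simpa only [Complex.ofReal_re, Complex.re_sum, Complex.mul_re, Complex.natCast_re,
    Complex.natCast_im, zero_mul, sub_zero, Complex.exp_ofReal_mul_I_re] using h

lemma cos_sum_split (n : ℕ) (t : ℝ) :
    ∑ j ∈ range (2 * n + 1), (Nat.choose (2 * n) j : ℝ) *
        Real.cos (((j : ℝ) - (n : ℝ)) * t) =
      (Nat.choose (2 * n) n : ℝ) +
        2 * ∑ i ∈ range n, (Nat.choose (2 * n) (n + 1 + i) : ℝ) *
          Real.cos (((1 + i : ℕ) : ℝ) * t) := by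
  set g : ℕ → ℝ := fun j => (Nat.choose (2 * n) j : ℝ) * Real.cos (((j : ℝ) - (n : ℝ)) * t)
    with hg
  have split : ∑ j ∈ range (2 * n + 1), g j
      = (∑ j ∈ range (n + 1), g j) + ∑ i ∈ range n, g (n + 1 + i) := by
    rw [range_eq_Ico, ← Finset.sum_Ico_consecutive g (by omega : 0 ≤ n + 1)
      (by omega : n + 1 ≤ 2 * n + 1)]
    congr 1
    · rw [range_eq_Ico]
    rw [Finset.sum_Ico_eq_sum_range, show 2 * n + 1 - (n + 1) = n from by omega, range_eq_Ico]
  rw [split, Finset.sum_range_succ]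
  have hn : g n = (Nat.choose (2 * n) n : ℝ) := by simp [hg]
  have hrefl : ∑ j ∈ range n, g j = ∑ i ∈ range n, g (n - 1 - i) :=
    (Finset.sum_range_reflect g n).symm
  rw [hn, hrefl, add_right_comm, ← Finset.sum_add_distrib]
  have step : ∀ i ∈ range n, g (n - 1 - i) + g (n + 1 + i)
      = 2 * ((Nat.choose (2 * n) (n + 1 + i) : ℝ) * Real.cos (((1 + i : ℕ) : ℝ) * t)) := by
    intro i hi
    have hi' : i < n := Finset.mem_range.mp hi
    have hc : (Nat.choose (2 * n) (n - 1 - i) : ℝ) = Nat.choose (2 * n) (n + 1 + i) := by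
      rw [show n - 1 - i = 2 * n - (n + 1 + i) from by omega,
        Nat.choose_symm (by omega : n + 1 + i ≤ 2 * n)]
    have harg : (((n - 1 - i : ℕ) : ℝ) - n) * t = -(((1 + i : ℕ) : ℝ) * t) := by
      rw [show n - 1 - i = n - (1 + i) from by omega, Nat.cast_sub (by omega : 1 + i ≤ n)]
      push_cast
      ring
    have harg2 : (((n + 1 + i : ℕ) : ℝ) - n) * t = ((1 + i : ℕ) : ℝ) * t := by
      push_cast
      ring
    simp only [hg]
    rw [hc, harg, Real.cos_neg, harg2]
    ring
  rw [Finset.sum_congr rfl step, ← Finset.mul_sum]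
  ring

lemma cos_half_pow (n : ℕ) (t : ℝ) :
    (2 * Real.cos (t / 2)) ^ (2 * n) =
      (Nat.choose (2 * n) n : ℝ) +
        2 * ∑ i ∈ range n, (Nat.choose (2 * n) (n + 1 + i) : ℝ) *
          Real.cos (((1 + i : ℕ) : ℝ) * t) :=
  (cos_sum_real n t).trans (cos_sum_split n t)

noncomputable def hFun (n : ℕ) (ψ : ℝ) : ℝ :=
  ∑ k ∈ Icc 1 n, (Nat.choose (2 * n) (n + k) : ℝ) * (2 / (k : ℝ)) * Real.sin ((k : ℝ) * ψ)

lemma hFun_hasDerivAt (n : ℕ) (ψ : ℝ) :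
    HasDerivAt (hFun n)
      ((2 * Real.cos (ψ / 2)) ^ (2 * n) - (Nat.choose (2 * n) n : ℝ)) ψ := by
  have h : HasDerivAt (hFun n)
      (∑ k ∈ Icc 1 n, (Nat.choose (2 * n) (n + k) : ℝ) * (2 / (k : ℝ)) *
        (Real.cos ((k : ℝ) * ψ) * (k : ℝ))) ψ := by
    apply HasDerivAt.fun_sum
    intro k hk
    have h1 : HasDerivAt (fun x : ℝ => (k : ℝ) * x) (k : ℝ) ψ := by
      simpa using (hasDerivAt_id ψ).const_mul (k : ℝ)
    exact h1.sin.const_mul _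
  have val : (∑ k ∈ Icc 1 n, (Nat.choose (2 * n) (n + k) : ℝ) * (2 / (k : ℝ)) *
        (Real.cos ((k : ℝ) * ψ) * (k : ℝ)))
      = (2 * Real.cos (ψ / 2)) ^ (2 * n) - (Nat.choose (2 * n) n : ℝ) := by
    rw [cos_half_pow n ψ, sum_Icc_one n
      (fun k => (Nat.choose (2 * n) (n + k) : ℝ) * (2 / (k : ℝ)) *
        (Real.cos ((k : ℝ) * ψ) * (k : ℝ))), add_sub_cancel_left, Finset.mul_sum]
    refine Finset.sum_congr rfl fun i _ => ?_
    have hk : ((1 + i : ℕ) : ℝ) ≠ 0 := Nat.cast_ne_zero.mpr (by omega)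
    rw [show n + (1 + i) = n + 1 + i from by omega]
    field_simp
  exact val ▸ h

lemma hFun_nonneg (n : ℕ) {ψ : ℝ} (hψ : ψ ∈ Set.Icc 0 π) : 0 ≤ hFun n ψ := by
  have hderiv : ∀ x : ℝ, deriv (hFun n) x
      = (2 * Real.cos (x / 2)) ^ (2 * n) - (Nat.choose (2 * n) n : ℝ) :=
    fun x => (hFun_hasDerivAt n x).deriv
  have anti : AntitoneOn (deriv (hFun n)) (interior (Set.Icc 0 π)) := by
    rw [interior_Icc]
    intro x hx y hy hxy
    rw [hderiv, hderiv]
    have hy2 : (0 : ℝ) ≤ Real.cos (y / 2) :=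
      Real.cos_nonneg_of_mem_Icc ⟨by linarith [hy.1, Real.pi_pos], by linarith [hy.2]⟩
    have hcc : Real.cos (y / 2) ≤ Real.cos (x / 2) :=
      Real.cos_le_cos_of_nonneg_of_le_pi (by linarith [hx.1]) (by linarith [hy.2, Real.pi_pos])
        (by linarith)
    have := pow_le_pow_left₀ (by linarith : (0:ℝ) ≤ 2 * Real.cos (y / 2))
      (by linarith : 2 * Real.cos (y / 2) ≤ 2 * Real.cos (x / 2)) (2 * n)
    linarith
  have conc : ConcaveOn ℝ (Set.Icc 0 π) (hFun n) :=
    AntitoneOn.concaveOn_of_deriv (convex_Icc 0 π)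
      (fun x _ => (hFun_hasDerivAt n x).continuousAt.continuousWithinAt)
      (fun x _ => (hFun_hasDerivAt n x).differentiableAt.differentiableWithinAt)
      anti
  have h0 : hFun n 0 = 0 := by simp [hFun]
  have hpi : hFun n π = 0 := by
    apply Finset.sum_eq_zero
    intro k _
    rw [Real.sin_nat_mul_pi]
    ring
  obtain ⟨h0ψ, hψπ⟩ := hψ
  have hπpos := Real.pi_pos
  have ha : (0 : ℝ) ≤ 1 - ψ / π := by
    have : ψ / π ≤ 1 := (div_le_one hπpos).mpr hψπ
    linarith
  have hb : (0 : ℝ) ≤ ψ / π := div_nonneg h0ψ hπpos.le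
  have key := conc.2 (Set.left_mem_Icc.mpr hπpos.le) (Set.right_mem_Icc.mpr hπpos.le)
    ha hb (by ring)
  have harg : (1 - ψ / π) • (0 : ℝ) + (ψ / π) • π = ψ := by
    simp only [smul_eq_mul]
    field_simp
    ring
  rw [harg, h0, hpi] at key
  simpa using key

lemma fdCoeff_eq (n k : ℕ) (hk : k ∈ Icc 1 n) :
    fdCoeff n k = (-1 : ℝ) ^ k *
      ((Nat.choose (2 * n) (n + k) : ℝ) / (Nat.choose (2 * n) n : ℝ)) * (2 / (k : ℝ) ^ 2) := by
  obtain ⟨hk1, hk2⟩ := Finset.mem_Icc.mp hk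
  have e1 : Nat.choose (2 * n) (n + k) * ((n + k).factorial * (n - k).factorial)
      = (2 * n).factorial := by
    have h := Nat.choose_mul_factorial_mul_factorial (show n + k ≤ 2 * n by omega)
    rw [show 2 * n - (n + k) = n - k from by omega] at h
    rw [← mul_assoc]
    exact h
  have e2 : Nat.choose (2 * n) n * (n.factorial * n.factorial) = (2 * n).factorial := by
    have h := Nat.choose_mul_factorial_mul_factorial (show n ≤ 2 * n by omega)
    rw [show 2 * n - n = n from by omega] at h
    rw [← mul_assoc]
    exact h
  have hden : ((Nat.factorial (n - k) * Nat.factorial (n + k) : ℕ) : ℝ) ≠ 0 :=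
    Nat.cast_ne_zero.mpr (Nat.mul_ne_zero (Nat.factorial_ne_zero _) (Nat.factorial_ne_zero _))
  have hC : ((Nat.choose (2 * n) n : ℕ) : ℝ) ≠ 0 :=
    Nat.cast_ne_zero.mpr (Nat.choose_pos (by omega : n ≤ 2 * n)).ne'
  have enat : n.factorial * n.factorial * Nat.choose (2 * n) n
      = Nat.choose (2 * n) (n + k) * (Nat.factorial (n - k) * Nat.factorial (n + k)) := by
    calc n.factorial * n.factorial * Nat.choose (2 * n) n
        = Nat.choose (2 * n) n * (n.factorial * n.factorial) := by ring
      _ = (2 * n).factorial := e2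
      _ = Nat.choose (2 * n) (n + k) * ((n + k).factorial * (n - k).factorial) := e1.symm
      _ = Nat.choose (2 * n) (n + k) * (Nat.factorial (n - k) * Nat.factorial (n + k)) := by
          ring
  have frac : ((Nat.factorial n * Nat.factorial n : ℕ) : ℝ) /
      ((Nat.factorial (n - k) * Nat.factorial (n + k) : ℕ) : ℝ)
      = (Nat.choose (2 * n) (n + k) : ℝ) / (Nat.choose (2 * n) n : ℝ) := by
    rw [div_eq_div_iff hden hC]
    exact_mod_cast congrArg (Nat.cast (R := ℝ)) enat
  unfold fdCoeff
  rw [mul_div_assoc, frac]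

lemma fdSymbol_hasDerivAt (n : ℕ) (θ : ℝ) :
    HasDerivAt (fdSymbol n) (2 / (Nat.choose (2 * n) n : ℝ) * hFun n (π - θ)) θ := by
  have h : HasDerivAt (fdSymbol n)
      (2 * ∑ k ∈ Icc 1 n, fdCoeff n k * (-Real.sin ((k : ℝ) * θ) * (k : ℝ))) θ := by
    unfold fdSymbol
    apply HasDerivAt.const_add
    apply HasDerivAt.const_mul
    apply HasDerivAt.fun_sum
    intro k _
    have h1 : HasDerivAt (fun x : ℝ => (k : ℝ) * x) (k : ℝ) θ := by
      simpa using (hasDerivAt_id θ).const_mul (k : ℝ)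
    exact h1.cos.const_mul _
  have hC : ((Nat.choose (2 * n) n : ℕ) : ℝ) ≠ 0 :=
    Nat.cast_ne_zero.mpr (Nat.choose_pos (by omega : n ≤ 2 * n)).ne'
  have val : 2 * ∑ k ∈ Icc 1 n, fdCoeff n k * (-Real.sin ((k : ℝ) * θ) * (k : ℝ))
      = 2 / (Nat.choose (2 * n) n : ℝ) * hFun n (π - θ) := by
    unfold hFun
    rw [Finset.mul_sum, Finset.mul_sum]
    refine Finset.sum_congr rfl fun k hk => ?_
    obtain ⟨hk1, _⟩ := Finset.mem_Icc.mp hk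
    rw [fdCoeff_eq n k hk]
    have hs : Real.sin ((k : ℝ) * (π - θ)) = -((-1 : ℝ) ^ k * Real.sin ((k : ℝ) * θ)) := by
      rw [mul_sub, Real.sin_nat_mul_pi_sub]
    have hk0 : ((k : ℝ)) ≠ 0 := Nat.cast_ne_zero.mpr (by omega)
    rw [hs]
    field_simp
  exact val ▸ h

/-- `f_η` is nonnegative and monotone nondecreasing on `[0, π]`. -/
theorem fdSymbol_nonneg_monotoneOn (η : ℕ) (hη : 1 ≤ η) :
    (∀ θ ∈ Set.Icc 0 Real.pi, 0 ≤ fdSymbol η θ) ∧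
    MonotoneOn (fdSymbol η) (Set.Icc 0 Real.pi) := by
  have hC : (0 : ℝ) < (Nat.choose (2 * η) η : ℝ) := by
    exact_mod_cast Nat.choose_pos (by omega : η ≤ 2 * η)
  have hd := fdSymbol_hasDerivAt η
  have mono : MonotoneOn (fdSymbol η) (Set.Icc 0 π) := by
    apply monotoneOn_of_deriv_nonneg (convex_Icc 0 π)
      (fun x _ => (hd x).continuousAt.continuousWithinAt)
      (fun x _ => (hd x).differentiableAt.differentiableWithinAt)
    intro x hx
    rw [interior_Icc] at hx
    rw [(hd x).deriv]
    have hmem : π - x ∈ Set.Icc 0 π := ⟨by linarith [hx.2], by linarith [hx.1]⟩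
    exact mul_nonneg (div_nonneg (by norm_num) hC.le) (hFun_nonneg η hmem)
  refine ⟨?_, mono⟩
  intro θ hθ
  have h0 : fdSymbol η 0 = 0 := by
    unfold fdSymbol fdCoeff0
    simp
  have := mono (Set.left_mem_Icc.mpr Real.pi_pos.le) hθ hθ.1
  linarith [this, h0.ge, h0.le]
end

section
/- The finite difference symbols f_η converge uniformly on [0, π] to θ ↦ θ²: lim_{η→∞} sup_{θ∈[0,π]} |f_η(θ) − θ²| = 0. -/
open Real Finset Filter

/-! ### Auxiliary definitions -/

noncomputable def fdRat (η k : ℕ) : ℝ :=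
  ((Nat.factorial η * Nat.factorial η : ℕ) : ℝ) /
    ((Nat.factorial (η - k) * Nat.factorial (η + k) : ℕ) : ℝ)

noncomputable def invSq (k : ℕ) : ℝ := 1 / (k : ℝ) ^ 2

noncomputable def fdBound (η : ℕ) : ℝ :=
  8 * ∑ k ∈ Finset.Icc 1 η, invSq k * (1 - fdRat η k) + 8 * ∑' n : ℕ, invSq (n + (η + 1))

lemma fact_pos_real (n : ℕ) : (0:ℝ) < (Nat.factorial n : ℝ) := by
  exact_mod_cast Nat.factorial_pos n

lemma summable_invSq : Summable invSq := by
  have : Summable (fun n : ℕ => 1 / (n : ℝ) ^ (2:ℕ)) :=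
    Real.summable_one_div_nat_pow.mpr one_lt_two
  exact this

lemma invSq_nonneg (k : ℕ) : 0 ≤ invSq k := by unfold invSq; positivity

/-! ### Factorial ratio estimates -/

lemma fact_le (η k : ℕ) (h : k ≤ η) :
    Nat.factorial η * Nat.factorial η ≤ Nat.factorial (η - k) * Nat.factorial (η + k) := by
  induction k with
  | zero => simp
  | succ k ih =>
    have hk : k ≤ η := (Nat.le_succ k).trans h
    have h1 : η - k = (η - (k+1)) + 1 := by omega
    have h2 : η + (k+1) = (η + k) + 1 := by omega
    calc Nat.factorial η * Nat.factorial η ≤ Nat.factorial (η - k) * Nat.factorial (η + k) := ih hk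
      _ = ((η - (k+1)) + 1) * Nat.factorial (η - (k+1)) * Nat.factorial (η + k) := by
          rw [h1, Nat.factorial_succ]
      _ ≤ ((η + k) + 1) * Nat.factorial (η - (k+1)) * Nat.factorial (η + k) := by
          have : (η - (k+1)) + 1 ≤ (η + k) + 1 := by omega
          exact Nat.mul_le_mul_right _ (Nat.mul_le_mul_right _ this)
      _ = Nat.factorial (η - (k+1)) * Nat.factorial (η + (k+1)) := by
          rw [h2, Nat.factorial_succ]; ring

lemma fdRat_pos (η k : ℕ) : 0 < fdRat η k := by
  unfold fdRat
  apply div_pos <;> · push_cast; positivity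

lemma fdRat_le_one (η k : ℕ) (h : k ≤ η) : fdRat η k ≤ 1 := by
  unfold fdRat
  rw [div_le_one (by push_cast; positivity)]
  exact_mod_cast fact_le η k h

lemma fact_ge (η k : ℕ) (h : k ≤ η) :
    ((η:ℝ) - (k:ℝ)^2) * ((Nat.factorial (η - k) * Nat.factorial (η + k) : ℕ) : ℝ) ≤
      (η:ℝ) * ((Nat.factorial η * Nat.factorial η : ℕ) : ℝ) := by
  induction k with
  | zero => simp
  | succ k ih =>
    have hk : k ≤ η := (Nat.le_succ k).trans h
    have IH := ih hk
    by_cases hneg : (η:ℝ) - ((k:ℝ)+1)^2 ≤ 0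
    · calc ((η:ℝ) - ((k+1:ℕ):ℝ)^2) * _ ≤ 0 := by
            apply mul_nonpos_of_nonpos_of_nonneg
            · push_cast; linarith
            · push_cast; positivity
        _ ≤ (η:ℝ) * ((Nat.factorial η * Nat.factorial η : ℕ) : ℝ) := by push_cast; positivity
    · push_neg at hneg
      have h1 : η - k = (η - (k+1)) + 1 := by omega
      have h2 : η + (k+1) = (η + k) + 1 := by omega
      have e1 : ((Nat.factorial (η-k) : ℕ) : ℝ) = ((η:ℝ) - k) * (Nat.factorial (η-(k+1)) : ℕ) := by
        rw [h1, Nat.factorial_succ]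
        push_cast
        have : ((η - (k+1) : ℕ) : ℝ) = (η:ℝ) - (k+1) := by
          have := Nat.cast_sub h (R := ℝ); push_cast at this ⊢; linarith
        rw [this]; ring
      have e2 : ((Nat.factorial (η+(k+1)) : ℕ) : ℝ) = ((η:ℝ) + k + 1) * (Nat.factorial (η+k) : ℕ) := by
        rw [h2, Nat.factorial_succ]; push_cast; ring
      have key : ((η:ℝ) - ((k:ℝ)+1)^2) * ((η:ℝ) + k + 1) ≤ ((η:ℝ) - (k:ℝ)^2) * ((η:ℝ) - k) := by
        nlinarith [sq_nonneg (k:ℝ), sq_nonneg ((k:ℝ)+1)]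
      have a_pos : (0:ℝ) < (Nat.factorial (η-(k+1)) : ℕ) := fact_pos_real _
      have b_pos : (0:ℝ) < (Nat.factorial (η+k) : ℕ) := fact_pos_real _
      calc ((η:ℝ) - ((k+1:ℕ):ℝ)^2) * ((Nat.factorial (η-(k+1)) * Nat.factorial (η+(k+1)) : ℕ) : ℝ)
          = (((η:ℝ) - ((k:ℝ)+1)^2) * ((η:ℝ) + k + 1)) *
              ((Nat.factorial (η-(k+1)) : ℕ) : ℝ) * ((Nat.factorial (η+k) : ℕ) : ℝ) := by
            push_cast [e2]; ring
        _ ≤ (((η:ℝ) - (k:ℝ)^2) * ((η:ℝ) - k)) *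
              ((Nat.factorial (η-(k+1)) : ℕ) : ℝ) * ((Nat.factorial (η+k) : ℕ) : ℝ) := by
            apply mul_le_mul_of_nonneg_right _ b_pos.le
            exact mul_le_mul_of_nonneg_right key a_pos.le
        _ = ((η:ℝ) - (k:ℝ)^2) * ((Nat.factorial (η-k) * Nat.factorial (η+k) : ℕ) : ℝ) := by
            push_cast [e1]; ring
        _ ≤ (η:ℝ) * ((Nat.factorial η * Nat.factorial η : ℕ) : ℝ) := IH

lemma one_sub_fdRat_le (η k : ℕ) (h : k ≤ η) (hη : 0 < η) :
    1 - fdRat η k ≤ (k:ℝ)^2 / η := by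
  have hQ : (0:ℝ) < ((Nat.factorial (η - k) * Nat.factorial (η + k) : ℕ) : ℝ) := by
    push_cast; positivity
  have hf := fact_ge η k h
  have hηR : (0:ℝ) < η := by exact_mod_cast hη
  have key : (η:ℝ) - (k:ℝ)^2 ≤ (η:ℝ) * fdRat η k := by
    unfold fdRat
    rw [mul_div_assoc', le_div_iff₀ hQ]
    nlinarith [hf]
  rw [le_div_iff₀ hηR]
  nlinarith [key]

/-! ### Fourier expansion of `θ ^ 2` -/

lemma bern2_eval (x : ℝ) :
    (Polynomial.map (algebraMap ℚ ℝ) (Polynomial.bernoulli 2)).eval x = x^2 - x + 1/6 := by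
  have h2 : _root_.bernoulli 2 = 1/6 := by norm_num [_root_.bernoulli, bernoulli'_two]
  simp [Polynomial.bernoulli, Finset.sum_range_succ, bernoulli_one, h2]
  ring

lemma fourier_sq {θ : ℝ} (h : θ ∈ Set.Icc 0 π) :
    HasSum (fun n : ℕ => (-1:ℝ)^n * (1/(n:ℝ)^2) * Real.cos (n*θ)) (θ^2/4 - π^2/12) := by
  obtain ⟨h0, h1⟩ := h
  have hπ := Real.pi_pos
  have hx : (θ+π)/(2*π) ∈ Set.Icc (0:ℝ) 1 := by
    constructor
    · positivity
    · rw [div_le_one (by positivity)]; linarith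
  have H := hasSum_one_div_nat_pow_mul_cos (k := 1) one_ne_zero hx
  rw [bern2_eval] at H
  convert H using 1
  · funext n
    have harg : 2 * π * (n:ℝ) * ((θ+π)/(2*π)) = (n:ℝ)*π - (-((n:ℝ)*θ)) := by
      field_simp; ring
    rw [harg, Real.cos_nat_mul_pi_sub, Real.cos_neg]
    norm_num
    ring
  · norm_num [Nat.factorial]
    field_simp
    ring

lemma key_hasSum {θ : ℝ} (h : θ ∈ Set.Icc 0 π) :
    HasSum (fun n : ℕ => (-1:ℝ)^n * (1/(n:ℝ)^2) * (Real.cos (n*θ) - 1)) (θ^2/4) := by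
  have h1 := fourier_sq h
  have h0 := fourier_sq (Set.mem_Icc.mpr ⟨le_refl 0, Real.pi_pos.le⟩)
  simp only [mul_zero, Real.cos_zero] at h0
  have h2 := h1.sub h0
  convert h2 using 1
  · rfl
  · funext n; ring
  · ring

/-! ### Pointwise error bound -/

lemma fdSymbol_err {η : ℕ} (hη : 1 ≤ η) {θ : ℝ} (hθ : θ ∈ Set.Icc 0 π) :
    |fdSymbol η θ - θ^2| ≤ fdBound η := by
  set c : ℕ → ℝ := fun n => (-1:ℝ)^n * (1/(n:ℝ)^2) * (Real.cos (n*θ) - 1) with hc_def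
  have hc := key_hasSum hθ
  have hsum : Summable c := hc.summable
  have hsum' : Summable (fun n => c (n + (η+1))) := (summable_nat_add_iff (η+1)).mpr hsum
  have hsplit : ∑ i ∈ Finset.range (η+1), c i + ∑' i : ℕ, c (i + (η+1)) = θ^2/4 := by
    rw [Summable.sum_add_tsum_nat_add (η+1) hsum, hc.tsum_eq]
  have hrange : ∑ i ∈ Finset.range (η+1), c i = ∑ k ∈ Finset.Icc 1 η, c k := by
    refine (Finset.sum_subset ?_ ?_).symm
    · intro x hx
      simp only [Finset.mem_Icc] at hx
      simp only [Finset.mem_range]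
      omega
    · intro x hx hnx
      simp only [Finset.mem_range] at hx
      simp only [Finset.mem_Icc] at hnx
      have : x = 0 := by omega
      subst this
      simp [hc_def]
  have hco : ∀ k : ℕ, fdCoeff η k = (-1:ℝ)^k * fdRat η k * (2/(k:ℝ)^2) := by
    intro k; unfold fdCoeff fdRat; ring
  have hfd : fdSymbol η θ = ∑ k ∈ Finset.Icc 1 η, 4 * fdRat η k * c k := by
    unfold fdSymbol fdCoeff0
    rw [Finset.mul_sum, Finset.mul_sum, ← Finset.sum_add_distrib]
    apply Finset.sum_congr rfl
    intro k _
    rw [hco k, hc_def]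
    ring
  have hθsq : θ^2 = ∑ k ∈ Finset.Icc 1 η, 4 * c k + 4 * ∑' i : ℕ, c (i + (η + 1)) := by
    have h4 : ∑ k ∈ Finset.Icc 1 η, 4 * c k = 4 * ∑ k ∈ Finset.Icc 1 η, c k := by
      rw [Finset.mul_sum]
    rw [h4]
    rw [hrange] at hsplit
    linarith
  have hsumT : Summable (fun n => |c (n + (η+1))|) := hsum'.abs
  have hboundT : Summable (fun n : ℕ => 2 * invSq (n + (η+1))) :=
    ((summable_nat_add_iff (η+1)).mpr summable_invSq).mul_left 2
  have hcb : ∀ m : ℕ, |c m| ≤ 2 * invSq m := by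
    intro m
    rw [hc_def]
    simp only
    rw [abs_mul, abs_mul, abs_pow, abs_neg, abs_one, one_pow, one_mul]
    have h1 : |1/(m:ℝ)^2| = invSq m := by
      rw [abs_of_nonneg (by positivity)]; rfl
    have h2 : |Real.cos (m*θ) - 1| ≤ 2 := by
      have := Real.abs_cos_le_one ((m:ℝ)*θ)
      have h3 : |Real.cos (m*θ) - 1| ≤ |Real.cos (m*θ)| + |(1:ℝ)| := abs_sub _ _
      simp only [abs_one] at h3
      linarith
    rw [h1]
    have := invSq_nonneg m
    nlinarith
  rw [hfd, hθsq]
  have hre : ∑ k ∈ Finset.Icc 1 η, 4 * fdRat η k * c k -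
      (∑ k ∈ Finset.Icc 1 η, 4 * c k + 4 * ∑' i : ℕ, c (i + (η + 1)))
      = ∑ k ∈ Finset.Icc 1 η, (4 * fdRat η k * c k - 4 * c k)
        - 4 * ∑' i : ℕ, c (i + (η + 1)) := by
    rw [Finset.sum_sub_distrib]; ring
  rw [hre]
  calc |∑ k ∈ Finset.Icc 1 η, (4 * fdRat η k * c k - 4 * c k)
        - 4 * ∑' i : ℕ, c (i + (η + 1))|
      ≤ |∑ k ∈ Finset.Icc 1 η, (4 * fdRat η k * c k - 4 * c k)|
        + |4 * ∑' i : ℕ, c (i + (η + 1))| := abs_sub _ _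
    _ ≤ ∑ k ∈ Finset.Icc 1 η, |4 * fdRat η k * c k - 4 * c k|
        + 4 * |∑' i : ℕ, c (i + (η + 1))| := by
        gcongr
        · exact Finset.abs_sum_le_sum_abs _ _
        · rw [abs_mul]; norm_num
    _ ≤ ∑ k ∈ Finset.Icc 1 η, 8 * (invSq k * (1 - fdRat η k))
        + 4 * ∑' n : ℕ, (2 * invSq (n + (η+1))) := by
        gcongr with k hk
        · simp only [Finset.mem_Icc] at hk
          have hr1 := fdRat_le_one η k hk.2
          have hterm : 4 * fdRat η k * c k - 4 * c k = 4 * (fdRat η k - 1) * c k := by ring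
          rw [hterm, abs_mul, abs_mul]
          have habs4 : |(4:ℝ)| = 4 := by norm_num
          have habsr : |fdRat η k - 1| = 1 - fdRat η k := by
            rw [abs_of_nonpos (by linarith)]; ring
          rw [habs4, habsr]
          have h1 : 0 ≤ 1 - fdRat η k := by linarith
          have h2 := hcb k
          have h3 := abs_nonneg (c k)
          nlinarith [invSq_nonneg k]
        · calc |∑' i : ℕ, c (i + (η + 1))| ≤ ∑' i : ℕ, |c (i + (η + 1))| := by
                have := norm_tsum_le_tsum_norm (f := fun i => c (i + (η + 1)))
                  (by simpa [Real.norm_eq_abs] using hsumT)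
                simpa [Real.norm_eq_abs] using this
            _ ≤ ∑' n : ℕ, (2 * invSq (n + (η+1))) :=
                Summable.tsum_le_tsum (fun i => hcb _) hsumT hboundT
    _ = fdBound η := by
        unfold fdBound
        rw [tsum_mul_left, ← Finset.mul_sum]
        ring

/-- `sup_{θ∈[0,π]} |f_η(θ) − θ²| → 0` as `η → ∞`. -/
theorem fdSymbol_tendstoUniformly :
    Filter.Tendsto
      (fun η : ℕ => sSup ((fun θ : ℝ => |fdSymbol η θ - θ ^ 2|) '' Set.Icc 0 Real.pi))
      Filter.atTop (nhds 0) := by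
  -- the bound tends to zero
  have hD : Tendsto (fun η : ℕ => ∑ k ∈ Finset.Icc 1 η, invSq k * (1 - fdRat η k))
      atTop (nhds 0) := by
    have heq : ∀ η : ℕ, ∑ k ∈ Finset.Icc 1 η, invSq k * (1 - fdRat η k)
        = ∑' k : ℕ, (if k ∈ Finset.Icc 1 η then invSq k * (1 - fdRat η k) else 0) := by
      intro η
      rw [tsum_eq_sum (s := Finset.Icc 1 η) (fun b hb => if_neg hb)]
      exact Finset.sum_congr rfl fun k hk => (if_pos hk).symm
    simp only [heq]
    have main : Tendsto (fun η : ℕ => ∑' k : ℕ,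
        (if k ∈ Finset.Icc 1 η then invSq k * (1 - fdRat η k) else 0)) atTop
        (nhds (∑' _k : ℕ, (0:ℝ))) := by
      apply tendsto_tsum_of_dominated_convergence (bound := invSq) summable_invSq
      · intro k
        rcases Nat.eq_zero_or_pos k with hk0 | hk1
        · subst hk0
          simp only [Finset.mem_Icc]
          norm_num
        · apply squeeze_zero' (g := fun η : ℕ => 1/(η:ℝ))
          · filter_upwards with η
            split_ifs with hmem
            · simp only [Finset.mem_Icc] at hmem
              have := fdRat_le_one η k hmem.2
              have := invSq_nonneg k
              nlinarith
            · exact le_refl 0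
          · filter_upwards [eventually_ge_atTop k] with η hηk
            have hmem : k ∈ Finset.Icc 1 η := Finset.mem_Icc.mpr ⟨hk1, hηk⟩
            rw [if_pos hmem]
            have hηpos : 0 < η := lt_of_lt_of_le hk1 hηk
            have h1 := one_sub_fdRat_le η k hηk hηpos
            calc invSq k * (1 - fdRat η k) ≤ invSq k * ((k:ℝ)^2/η) :=
                mul_le_mul_of_nonneg_left h1 (invSq_nonneg k)
              _ = 1/(η:ℝ) := by
                  unfold invSq
                  have hkR : ((k:ℝ))^2 ≠ 0 := by positivity
                  field_simp
          · exact tendsto_one_div_atTop_nhds_zero_nat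
      · filter_upwards with η k
        split_ifs with hmem
        · simp only [Finset.mem_Icc] at hmem
          have h1 := fdRat_le_one η k hmem.2
          have h2 := (fdRat_pos η k).le
          rw [Real.norm_eq_abs, abs_of_nonneg (by nlinarith [invSq_nonneg k])]
          nlinarith [invSq_nonneg k]
        · simp [invSq_nonneg k]
    rw [tsum_zero] at main
    exact main
  have hT : Tendsto (fun η : ℕ => ∑' n : ℕ, invSq (n + (η + 1))) atTop (nhds 0) := by
    have h1 := tendsto_sum_nat_add invSq
    have h2 : Tendsto (fun η : ℕ => η + 1) atTop atTop := tendsto_add_atTop_nat 1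
    exact h1.comp h2
  have hG : Tendsto fdBound atTop (nhds 0) := by
    have := ((hD.const_mul (8:ℝ)).add (hT.const_mul (8:ℝ)))
    unfold fdBound
    simpa using this
  -- squeeze
  have hπ := Real.pi_pos
  have hmem0 : (0:ℝ) ∈ Set.Icc 0 π := Set.mem_Icc.mpr ⟨le_refl 0, hπ.le⟩
  apply tendsto_of_tendsto_of_tendsto_of_le_of_le' tendsto_const_nhds hG
  · filter_upwards [eventually_ge_atTop 1] with η hη
    have hbdd : BddAbove ((fun θ : ℝ => |fdSymbol η θ - θ ^ 2|) '' Set.Icc 0 Real.pi) := by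
      refine ⟨fdBound η, ?_⟩
      rintro x ⟨θ, hθ, rfl⟩
      exact fdSymbol_err hη hθ
    have hmem : |fdSymbol η 0 - (0:ℝ)^2| ∈
        (fun θ : ℝ => |fdSymbol η θ - θ ^ 2|) '' Set.Icc 0 π := ⟨0, hmem0, rfl⟩
    exact le_trans (abs_nonneg _) (le_csSup hbdd hmem)
  · filter_upwards [eventually_ge_atTop 1] with η hη
    apply csSup_le
    · exact ⟨_, ⟨0, hmem0, rfl⟩⟩
    · rintro x ⟨θ, hθ, rfl⟩
      exact fdSymbol_err hη hθ
end

section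
/- Fix α > 0 and k ≥ 1, and suppose g : [0,1] → ℝ satisfies g(x)/(x²π²) → 1 as x → 0⁺. Then the sequence e_n = |(n+1)²·g(k/(n+1))/(k²π² + α/4) − 1| converges as n → ∞ to c_{α,k} = (α/4)/(k²π² + α/4) > 0, and c_{α,k} → 0 as k → ∞. -/
open Real Filter

/-- If `g(x)/(x²π²) → 1` as `x → 0⁺`, then the relative analytic error
`|(n+1)² g(k/(n+1))/(k²π² + α/4) − 1|` tends to
`c_{α,k} = (α/4)/(k²π² + α/4) > 0`, and `c_{α,k} → 0` as `k → ∞`. -/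
theorem analytic_relative_error_lower_bound (α : ℝ) (hα : 0 < α) (k : ℕ) (hk : 1 ≤ k)
    (g : ℝ → ℝ)
    (hg : Filter.Tendsto (fun x : ℝ => g x / (x ^ 2 * Real.pi ^ 2))
      (nhdsWithin 0 (Set.Ioi 0)) (nhds 1)) :
    Filter.Tendsto
      (fun n : ℕ => |((n : ℝ) + 1) ^ 2 * g ((k : ℝ) / ((n : ℝ) + 1)) /
          ((k : ℝ) ^ 2 * Real.pi ^ 2 + α / 4) - 1|)
      Filter.atTop
      (nhds ((α / 4) / ((k : ℝ) ^ 2 * Real.pi ^ 2 + α / 4))) ∧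
    0 < (α / 4) / ((k : ℝ) ^ 2 * Real.pi ^ 2 + α / 4) ∧
    Filter.Tendsto (fun j : ℕ => (α / 4) / ((j : ℝ) ^ 2 * Real.pi ^ 2 + α / 4))
      Filter.atTop (nhds 0) := by
  have hπ : (0 : ℝ) < Real.pi := Real.pi_pos
  have hkpos : (0 : ℝ) < (k : ℝ) := by exact_mod_cast hk
  have hD : (0 : ℝ) < (k : ℝ) ^ 2 * Real.pi ^ 2 + α / 4 := by positivity
  refine ⟨?_, by positivity, ?_⟩
  · -- x n → 0 within Ioi 0
    have hx : Tendsto (fun n : ℕ => (k : ℝ) / ((n : ℝ) + 1)) atTop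
        (nhdsWithin 0 (Set.Ioi 0)) := by
      rw [tendsto_nhdsWithin_iff]
      constructor
      · have := tendsto_one_div_add_atTop_nhds_zero_nat.const_mul (k : ℝ)
        simpa [div_eq_mul_inv, mul_comm] using this
      · exact Filter.Eventually.of_forall fun n => by
          have : (0 : ℝ) < (n : ℝ) + 1 := by positivity
          exact Set.mem_Ioi.mpr (by positivity)
    have hq : Tendsto (fun n : ℕ =>
        g ((k : ℝ) / ((n : ℝ) + 1)) / (((k : ℝ) / ((n : ℝ) + 1)) ^ 2 * Real.pi ^ 2))
        atTop (nhds 1) := hg.comp hx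
    have key : Tendsto
        (fun n : ℕ => ((n : ℝ) + 1) ^ 2 * g ((k : ℝ) / ((n : ℝ) + 1)) /
          ((k : ℝ) ^ 2 * Real.pi ^ 2 + α / 4) - 1)
        atTop (nhds (-(α / 4) / ((k : ℝ) ^ 2 * Real.pi ^ 2 + α / 4))) := by
      have h2 : Tendsto
          (fun n : ℕ =>
            (g ((k : ℝ) / ((n : ℝ) + 1)) / (((k : ℝ) / ((n : ℝ) + 1)) ^ 2 * Real.pi ^ 2)) *
              ((k : ℝ) ^ 2 * Real.pi ^ 2 / ((k : ℝ) ^ 2 * Real.pi ^ 2 + α / 4)) - 1)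
          atTop (nhds (1 * ((k : ℝ) ^ 2 * Real.pi ^ 2 / ((k : ℝ) ^ 2 * Real.pi ^ 2 + α / 4)) - 1)) :=
        ((hq.mul_const _).sub_const 1)
      have heq : (1 : ℝ) * ((k : ℝ) ^ 2 * Real.pi ^ 2 / ((k : ℝ) ^ 2 * Real.pi ^ 2 + α / 4)) - 1
          = -(α / 4) / ((k : ℝ) ^ 2 * Real.pi ^ 2 + α / 4) := by
        field_simp
        ring
      rw [heq] at h2
      refine h2.congr fun n => ?_
      have hn : (0 : ℝ) < (n : ℝ) + 1 := by positivity
      field_simp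
    have := key.abs
    have habs : |(-(α / 4) / ((k : ℝ) ^ 2 * Real.pi ^ 2 + α / 4))|
        = (α / 4) / ((k : ℝ) ^ 2 * Real.pi ^ 2 + α / 4) := by
      rw [abs_of_nonpos (by
        apply div_nonpos_of_nonpos_of_nonneg <;> [linarith; linarith])]
      ring
    rwa [habs] at this
  · -- c_{α,j} → 0
    have hden : Tendsto (fun j : ℕ => (j : ℝ) ^ 2 * Real.pi ^ 2 + α / 4) atTop atTop := by
      apply Filter.tendsto_atTop_add_const_right
      apply Tendsto.atTop_mul_const (by positivity)
      exact (tendsto_pow_atTop (two_ne_zero)).comp (tendsto_natCast_atTop_atTop (R := ℝ))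
    simpa [div_eq_mul_inv] using (hden.inv_tendsto_atTop).const_mul (α / 4)
end
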